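/- Let q ≥ 2 and H(z) a Laurent polynomial vector. The LP² matrix Φ_H(z) = [H(z), I − H(z)H*(z)] satisfies Φ_H(z)Φ_H*(z) = I for all z ∈ 𝕋ⁿ if and only if H*(z)H(z) = 1 for all z ∈ 𝕋ⁿ. -/

import Mathlib

open Matrix Complex

/-- Evaluation of a Laurent polynomial in `n` variables with real coefficients
(given by its finitely supported coefficient family `c`) at `z ∈ ℂⁿ`. -/
noncomputable def lEval {n : ℕ} (c : (Fin n → ℤ) →₀ ℝ) (z : Fin n → ℂ) : ℂ :=
  ∑ m ∈ c.support, (c m : ℂ) * ∏ i, z i ^ m i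

/-- The LP² matrix `Φ_H(z) = [H(z), I − H(z)H*(z)]` associated with the Laurent
polynomial vector `H` with coefficient families `c j`; here
`H*(z) = [H₀(z⁻¹), …, H_{q−1}(z⁻¹)]`. -/
noncomputable def PhiL {n q : ℕ} (c : Fin q → ((Fin n → ℤ) →₀ ℝ))
    (z : Fin n → ℂ) : Matrix (Fin q) (Fin (q + 1)) ℂ :=
  Matrix.of fun i j =>
    if hj : j = 0 then lEval (c i) z
    else (if i = j.pred hj then (1 : ℂ) else 0) -
      lEval (c i) z * lEval (c (j.pred hj)) (fun i' => (z i')⁻¹)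

/-- The conjugate transpose `Φ_H*(z)` of the Laurent polynomial matrix
`Φ_H(z)`: its entries are the entries of `Φ_H` with `z` replaced by `z⁻¹`,
transposed. -/
noncomputable def PhiLstar {n q : ℕ} (c : Fin q → ((Fin n → ℤ) →₀ ℝ))
    (z : Fin n → ℂ) : Matrix (Fin (q + 1)) (Fin q) ℂ :=
  (PhiL c (fun i => (z i)⁻¹)).transpose

/-! On the torus `z⁻¹ = conj z`, so `H*(z)H(z) = ∑ⱼ |Hⱼ(z)|²` is real and nonnegative. Multiplying
out the blocks gives `Φ_H Φ_H* = I + H H* (H*H - 1)`; hence the converse direction is immediate, and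
conversely the trace of `H H* (H*H - 1) = 0` gives `H*H (H*H - 1) = 0`, so `H*H ∈ {0, 1}` pointwise.
Being continuous on the connected torus, `H*H` is constant there, and it is nonzero wherever some
`Hⱼ` is nonzero. -/

open ComplexConjugate

-- The paper's `H*(z)H(z)`.
noncomputable def paraNormSq {n q : ℕ} (c : Fin q → ((Fin n → ℤ) →₀ ℝ)) (z : Fin n → ℂ) : ℂ :=
  ∑ j, lEval (c j) (fun i => (z i)⁻¹) * lEval (c j) z

def torus (n : ℕ) : Set (Fin n → ℂ) := {z | ∀ i, ‖z i‖ = 1}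

theorem isPreconnected_torus (n : ℕ) : IsPreconnected (torus n) := by
  have : torus n = Set.univ.pi fun _ => Metric.sphere (0 : ℂ) 1 := by ext; simp [torus]
  rw [this]
  exact isPreconnected_univ_pi fun _ =>
    isPreconnected_sphere (by simp [Complex.rank_real_complex]) 0 1

theorem torus_subset_ne_zero (n : ℕ) : torus n ⊆ {z | ∀ i, z i ≠ 0} :=
  fun _ hz i => norm_ne_zero_iff.1 ((hz i).symm ▸ one_ne_zero)

theorem continuousOn_lEval {n : ℕ} (c : (Fin n → ℤ) →₀ ℝ) :
    ContinuousOn (lEval c) {z | ∀ i, z i ≠ 0} :=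
  continuousOn_finsetSum _ fun _ _ => continuousOn_const.mul <|
    continuousOn_finsetProd _ fun i _ =>
      (continuous_apply i).continuousOn.zpow₀ _ fun _ hz => .inl (hz i)

theorem continuousOn_paraNormSq {n q : ℕ} (c : Fin q → ((Fin n → ℤ) →₀ ℝ)) :
    ContinuousOn (paraNormSq c) {z | ∀ i, z i ≠ 0} := by
  have hinv : ContinuousOn (fun z : Fin n → ℂ => fun i => (z i)⁻¹) {z | ∀ i, z i ≠ 0} :=
    continuousOn_pi.2 fun i => (continuous_apply i).continuousOn.inv₀ fun _ hz => hz i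
  exact continuousOn_finsetSum _ fun j _ =>
    ((continuousOn_lEval (c j)).comp hinv fun _ hz i => inv_ne_zero (hz i)).mul
      (continuousOn_lEval (c j))

theorem lEval_inv_eq_conj {n : ℕ} (c : (Fin n → ℤ) →₀ ℝ) {z : Fin n → ℂ} (hz : z ∈ torus n) :
    lEval c (fun i => (z i)⁻¹) = conj (lEval c z) := by
  simp only [lEval, map_sum, map_mul, map_prod, conj_ofReal, map_zpow₀, inv_eq_conj (hz _)]

theorem paraNormSq_eq_sum_normSq {n q : ℕ} (c : Fin q → ((Fin n → ℤ) →₀ ℝ)) {z : Fin n → ℂ}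
    (hz : z ∈ torus n) : paraNormSq c z = ((∑ j, normSq (lEval (c j) z) : ℝ) : ℂ) := by
  simp only [paraNormSq, lEval_inv_eq_conj _ hz, ofReal_sum, mul_comm (conj _), mul_conj]

theorem paraNormSq_ne_zero {n q : ℕ} (c : Fin q → ((Fin n → ℤ) →₀ ℝ)) {z : Fin n → ℂ}
    (hz : z ∈ torus n) {j : Fin q} (hj : lEval (c j) z ≠ 0) : paraNormSq c z ≠ 0 := by
  rw [paraNormSq_eq_sum_normSq c hz, ofReal_ne_zero]
  exact (Finset.sum_pos' (fun i _ => normSq_nonneg (lEval (c i) z))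
    ⟨j, Finset.mem_univ _, normSq_pos.2 hj⟩).ne'

theorem PhiL_mul_PhiLstar_apply {n q : ℕ} (c : Fin q → ((Fin n → ℤ) →₀ ℝ)) (z : Fin n → ℂ)
    (i k : Fin q) :
    (PhiL c z * PhiLstar c z) i k = (1 : Matrix (Fin q) (Fin q) ℂ) i k +
      lEval (c i) z * lEval (c k) (fun i => (z i)⁻¹) * (paraNormSq c z - 1) := by
  simp only [mul_apply, Fin.sum_univ_succ, PhiL, PhiLstar, transpose_apply, of_apply, inv_inv,
    Fin.succ_ne_zero, dite_false, dite_true, Fin.pred_succ, sub_mul, mul_sub, Finset.sum_sub_distrib,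
    paraNormSq, one_apply, ite_mul, mul_ite, one_mul, mul_one, zero_mul, mul_zero,
    Finset.sum_ite_eq, Finset.sum_ite_eq', Finset.mem_univ, if_true, Finset.mul_sum, eq_comm (a := k)]
  ring_nf

theorem paraNormSq_eq_zero_or_one {n q : ℕ} {c : Fin q → ((Fin n → ℤ) →₀ ℝ)} {z : Fin n → ℂ}
    (h : PhiL c z * PhiLstar c z = 1) : paraNormSq c z = 0 ∨ paraNormSq c z = 1 := by
  have hdiag : ∀ i, lEval (c i) z * lEval (c i) (fun i => (z i)⁻¹) * (paraNormSq c z - 1) = 0 :=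
    fun i => by simpa [h] using (PhiL_mul_PhiLstar_apply c z i i).symm
  have : paraNormSq c z * (paraNormSq c z - 1) = 0 := by
    simpa only [paraNormSq, mul_comm (lEval _ (fun i => (z i)⁻¹)), Finset.sum_mul] using
      Finset.sum_eq_zero fun i _ => hdiag i
  exact (mul_eq_zero.1 this).imp_right sub_eq_zero.1

theorem lp2_paraunitary_iff_general (n q : ℕ)
    (c : Fin q → ((Fin n → ℤ) →₀ ℝ))
    (hne : ∃ z : Fin n → ℂ, (∀ i, ‖z i‖ = 1) ∧ ∃ j, lEval (c j) z ≠ 0) :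
    (∀ z : Fin n → ℂ, (∀ i, ‖z i‖ = 1) → PhiL c z * PhiLstar c z = 1) ↔
    (∀ z : Fin n → ℂ, (∀ i, ‖z i‖ = 1) →
      ∑ j, lEval (c j) (fun i => (z i)⁻¹) * lEval (c j) z = 1) := by
  refine ⟨fun hΦ z hz => ?_, fun hS z hz => ?_⟩
  · obtain ⟨z₀, hz₀, j, hj⟩ := hne
    have hmaps : Set.MapsTo (paraNormSq c) (torus n) {0, 1} :=
      fun w hw => paraNormSq_eq_zero_or_one (hΦ w hw)
    have hconst : paraNormSq c z = paraNormSq c z₀ :=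
      (isPreconnected_torus n).constant_of_mapsTo (Set.toFinite _).isDiscrete
        ((continuousOn_paraNormSq c).mono (torus_subset_ne_zero n)) hmaps hz hz₀
    exact hconst.trans ((hmaps hz₀).resolve_left (paraNormSq_ne_zero c hz₀ hj))
  · ext i k
    rw [PhiL_mul_PhiLstar_apply, show paraNormSq c z = 1 from hS z hz, sub_self, mul_zero, add_zero]

/-- for a (nonzero) Laurent polynomial vector `H`, the LP² matrix
satisfies `Φ_H(z) Φ_H*(z) = I` for all `z ∈ 𝕋ⁿ` if and only if
`H*(z)H(z) = 1` for all `z ∈ 𝕋ⁿ`. -/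
theorem lp2_paraunitary_iff (n q : ℕ) (hq : 2 ≤ q)
    (c : Fin q → ((Fin n → ℤ) →₀ ℝ))
    (hne : ∃ z : Fin n → ℂ, (∀ i, ‖z i‖ = 1) ∧ ∃ j, lEval (c j) z ≠ 0) :
    (∀ z : Fin n → ℂ, (∀ i, ‖z i‖ = 1) → PhiL c z * PhiLstar c z = 1) ↔
    (∀ z : Fin n → ℂ, (∀ i, ‖z i‖ = 1) →
      ∑ j, lEval (c j) (fun i => (z i)⁻¹) * lEval (c j) z = 1) :=
  lp2_paraunitary_iff_general n q c hne
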